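/- In the generalized corona product G∘̃(H_1,...,H_n), a vertex v_p of H_i and a vertex v_q of H_j (i ≠ j) are antipodal (at distance equal to the diameter of the product) if and only if u_i and u_j are antipodal in G. -/

import Mathlib

open SimpleGraph

/-- A strong geodetic set: an assignment of a (unique) geodesic to each pair of
vertices of `S` such that every vertex lies on one of the assigned geodesics. -/
def IsStrongGeodeticSet {V : Type*} (G : SimpleGraph V) (S : Set V) : Prop :=
  ∃ f : ∀ u v : V, u ∈ S → v ∈ S → G.Walk u v,
    (∀ u v hu hv, (f u v hu hv).length = G.dist u v) ∧
    (∀ x : V, ∃ u v hu hv, x ∈ (f u v hu hv).support)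

/-- A strong 2-geodetic set: as above, but all assigned geodesics have length ≤ 2. -/
def IsStrong2GeodeticSet {V : Type*} (G : SimpleGraph V) (S : Set V) : Prop :=
  ∃ f : ∀ u v : V, u ∈ S → v ∈ S → G.Walk u v,
    (∀ u v hu hv, (f u v hu hv).length = G.dist u v ∧ (f u v hu hv).length ≤ 2) ∧
    (∀ x : V, ∃ u v hu hv, x ∈ (f u v hu hv).support)

/-- The strong geodetic number `Sg(G)`. -/
noncomputable def strongGeodeticNumber (V : Type*) [Fintype V] (G : SimpleGraph V) : ℕ :=
  sInf {n | ∃ S : Finset V, S.card = n ∧ IsStrongGeodeticSet G ↑S}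

/-- The strong 2-geodetic number `Sg'(G)`. -/
noncomputable def strong2GeodeticNumber (V : Type*) [Fintype V] (G : SimpleGraph V) : ℕ :=
  sInf {n | ∃ S : Finset V, S.card = n ∧ IsStrong2GeodeticSet G ↑S}

/-- Adjacency generator for the generalized corona product. -/
def genCoronaRel {α : Type*} {β : α → Type*} (G : SimpleGraph α)
    (H : ∀ i, SimpleGraph (β i)) :
    (α ⊕ (Σ i, β i)) → (α ⊕ (Σ i, β i)) → Prop
  | Sum.inl a, Sum.inl b => G.Adj a b
  | Sum.inl a, Sum.inr x => a = x.1
  | Sum.inr x, Sum.inl a => a = x.1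
  | Sum.inr x, Sum.inr y => ∃ h : x.1 = y.1, (H y.1).Adj (h ▸ x.2) y.2

/-- The generalized corona product `G ∘̃ (H₁, …, Hₙ)`: the `i`-th vertex of `G`
is joined to every vertex of `H i`. -/
def genCorona {α : Type*} {β : α → Type*} (G : SimpleGraph α)
    (H : ∀ i, SimpleGraph (β i)) : SimpleGraph (α ⊕ (Σ i, β i)) :=
  SimpleGraph.fromRel (genCoronaRel G H)

/-- Adjacency generator for the generalized edge corona product. -/
def genEdgeCoronaRel {α : Type*} (G : SimpleGraph α) {β : G.edgeSet → Type*}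
    (H : ∀ e, SimpleGraph (β e)) :
    (α ⊕ (Σ e, β e)) → (α ⊕ (Σ e, β e)) → Prop
  | Sum.inl a, Sum.inl b => G.Adj a b
  | Sum.inl a, Sum.inr x => a ∈ (x.1 : Sym2 α)
  | Sum.inr x, Sum.inl a => a ∈ (x.1 : Sym2 α)
  | Sum.inr x, Sum.inr y => ∃ h : x.1 = y.1, (H y.1).Adj (h ▸ x.2) y.2

/-- The generalized edge corona product `G ⋄̃ (H_e)_{e ∈ E(G)}`: both endpoints of
the edge `e` of `G` are joined to every vertex of `H e`. -/
def genEdgeCorona {α : Type*} (G : SimpleGraph α) {β : G.edgeSet → Type*}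
    (H : ∀ e, SimpleGraph (β e)) : SimpleGraph (α ⊕ (Σ e, β e)) :=
  SimpleGraph.fromRel (genEdgeCoronaRel G H)

/-- Adjacency generator for the generalized neighborhood corona product. -/
def genNbrCoronaRel {α : Type*} {β : α → Type*} (G : SimpleGraph α)
    (H : ∀ i, SimpleGraph (β i)) :
    (α ⊕ (Σ i, β i)) → (α ⊕ (Σ i, β i)) → Prop
  | Sum.inl a, Sum.inl b => G.Adj a b
  | Sum.inl a, Sum.inr x => G.Adj a x.1
  | Sum.inr x, Sum.inl a => G.Adj a x.1
  | Sum.inr x, Sum.inr y => ∃ h : x.1 = y.1, (H y.1).Adj (h ▸ x.2) y.2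

/-- The generalized neighborhood corona product `G ⋆̃ (H₁, …, Hₙ)`: every vertex
of `H i` is joined to every `G`-neighbor of the `i`-th vertex of `G`. -/
def genNbrCorona {α : Type*} {β : α → Type*} (G : SimpleGraph α)
    (H : ∀ i, SimpleGraph (β i)) : SimpleGraph (α ⊕ (Σ i, β i)) :=
  SimpleGraph.fromRel (genNbrCoronaRel G H)

/-- Adjacency generator for the (ordinary) corona product. -/
def coronaRel {α β : Type*} (G : SimpleGraph α) (H : SimpleGraph β) :
    (α ⊕ α × β) → (α ⊕ α × β) → Prop
  | Sum.inl a, Sum.inl b => G.Adj a b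
  | Sum.inl a, Sum.inr x => a = x.1
  | Sum.inr x, Sum.inl a => a = x.1
  | Sum.inr x, Sum.inr y => x.1 = y.1 ∧ H.Adj x.2 y.2

/-- The corona product `G ∘ H`: the `i`-th vertex of `G` is joined to every
vertex of the `i`-th copy of `H`. -/
def corona {α β : Type*} (G : SimpleGraph α) (H : SimpleGraph β) :
    SimpleGraph (α ⊕ α × β) :=
  SimpleGraph.fromRel (coronaRel G H)

/-- Vertex type of the iterated corona graphs `G^(m)`. -/
def coronaIterType (α : Type u) : ℕ → Type u
  | 0 => α
  | m + 1 => coronaIterType α m ⊕ coronaIterType α m × α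

/-- The corona graph sequence `G^(0) = G`, `G^(m+1) = G^(m) ∘ G`. -/
def coronaIter {α : Type u} (G : SimpleGraph α) : ∀ m, SimpleGraph (coronaIterType α m)
  | 0 => G
  | m + 1 => corona (coronaIter G m) G

/-- Fintype instances for the iterated corona vertex types. -/
def coronaIterFintype (α : Type u) [Fintype α] [DecidableEq α] :
    ∀ m, Fintype (coronaIterType α m)
  | 0 => inferInstanceAs (Fintype α)
  | m + 1 =>
      letI := coronaIterFintype α m
      inferInstanceAs (Fintype (coronaIterType α m ⊕ coronaIterType α m × α))

/-! A vertex of `H i` meets the rest of the product only through `u_i`, so for `i ≠ j` a shortest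
path from `H i` to `H j` is a geodesic of `G` with one extra edge at each end; the matching lower
bound comes from a potential that drops by at most one along each edge. Every vertex is within
distance one of `G`, hence the diameter is `diam G + 2`, attained between copies over a diametral
pair of `G`. Both identities hold for `edist` and `ediam` in `ℕ∞`, and `toNat` preserves the
equivalence because neither side vanishes. -/

open Sum

namespace SimpleGraph

variable {V W : Type*} {G : SimpleGraph V}

lemma edist_map_le {G' : SimpleGraph W} (f : G →g G') (u v : V) :
    G'.edist (f u) (f v) ≤ G.edist u v :=
  le_iInf fun p => (edist_le (p.map f)).trans_eq (by rw [Walk.length_map])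

lemma Walk.le_add_length {f : V → ℕ∞} (hf : ∀ ⦃u v⦄, G.Adj u v → f u ≤ f v + 1) {u v : V}
    (p : G.Walk u v) : f u ≤ f v + p.length := by
  induction p with
  | nil => simp
  | cons h p ih =>
    calc _ ≤ _ + 1 := hf h
      _ ≤ _ + p.length + 1 := by gcongr
      _ = _ := by rw [Walk.length_cons]; push_cast; ring

lemma le_add_edist {f : V → ℕ∞} (hf : ∀ ⦃u v⦄, G.Adj u v → f u ≤ f v + 1) (u v : V) :
    f u ≤ f v + G.edist u v := by
  by_cases h : G.Reachable u v
  · obtain ⟨p, hp⟩ := h.exists_walk_length_eq_edist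
    exact hp ▸ p.le_add_length hf
  · simp [edist_eq_top_of_not_reachable h]

end SimpleGraph

lemma ENat.toNat_add_left_inj {x y : ℕ∞} (hx : x ≠ 0) (hy : y ≠ 0) (n : ℕ) :
    (x + n).toNat = (y + n).toNat ↔ x.toNat = y.toNat := by
  induction x using ENat.recTopCoe <;> induction y using ENat.recTopCoe <;>
    simp_all [← Nat.cast_add]
  all_goals omega

section genCorona

variable {α : Type*} {β : α → Type*} {G : SimpleGraph α} {H : ∀ i, SimpleGraph (β i)}

@[simp]
lemma genCorona_adj_inl_inl {a b : α} : (genCorona G H).Adj (inl a) (inl b) ↔ G.Adj a b := by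
  simp only [genCorona, SimpleGraph.fromRel_adj, genCoronaRel, ne_eq, inl.injEq]
  exact ⟨fun ⟨_, h⟩ => h.elim id .symm, fun h => ⟨h.ne, .inl h⟩⟩

@[simp]
lemma genCorona_adj_inl_inr {a : α} {x : Σ i, β i} :
    (genCorona G H).Adj (inl a) (inr x) ↔ a = x.1 := by
  simp [genCorona, genCoronaRel]

lemma genCorona_fst_eq_of_adj_inr_inr {x y : Σ i, β i} (h : (genCorona G H).Adj (inr x) (inr y)) :
    x.1 = y.1 := by
  obtain ⟨-, ⟨h, -⟩ | ⟨h, -⟩⟩ := h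
  exacts [h, h.symm]

variable (G H) in
def genCoronaInl : G →g genCorona G H :=
  ⟨inl, genCorona_adj_inl_inl.mpr⟩

lemma genCorona_edist_inr_inl_fst (x : Σ i, β i) :
    (genCorona G H).edist (inr x) (inl x.1) = 1 :=
  SimpleGraph.edist_eq_one_iff_adj.mpr (genCorona_adj_inl_inr.mpr rfl).symm

lemma genCorona_exists_edist_inl_le_one (v : α ⊕ (Σ i, β i)) :
    ∃ a, (genCorona G H).edist v (inl a) ≤ 1 := by
  rcases v with a | x
  · exact ⟨a, by simp⟩
  · exact ⟨x.1, (genCorona_edist_inr_inl_fst x).le⟩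

lemma genCorona_edist_le {u v : α ⊕ (Σ i, β i)} {a b : α}
    (ha : (genCorona G H).edist u (inl a) ≤ 1) (hb : (genCorona G H).edist (inl b) v ≤ 1) :
    (genCorona G H).edist u v ≤ G.edist a b + 2 :=
  calc _ ≤ (genCorona G H).edist u (inl a) + (genCorona G H).edist (inl a) v :=
        SimpleGraph.edist_triangle
    _ ≤ (genCorona G H).edist u (inl a) + ((genCorona G H).edist (inl a) (inl b)
        + (genCorona G H).edist (inl b) v) := by gcongr; exact SimpleGraph.edist_triangle
    _ ≤ 1 + (G.edist a b + 1) := by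
        gcongr; exact SimpleGraph.edist_map_le (genCoronaInl G H) a b
    _ = G.edist a b + 2 := by ring

variable (β) in
open Classical in
-- A lower bound for the distance to any vertex of `H j` that drops by at most one along an edge.
noncomputable def genCoronaPotential (G : SimpleGraph α) (j : α) : α ⊕ (Σ i, β i) → ℕ∞
  | inl a => G.edist a j + 1
  | inr x => if x.1 = j then 0 else G.edist x.1 j + 2

lemma genCoronaPotential_le_add_one (j : α) ⦃u v : α ⊕ (Σ i, β i)⦄
    (h : (genCorona G H).Adj u v) :
    genCoronaPotential β G j u ≤ genCoronaPotential β G j v + 1 := by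
  rcases u with a | ⟨k, x⟩ <;> rcases v with b | ⟨l, y⟩
  · have hab : G.edist a j ≤ G.edist b j + 1 := by
      calc _ ≤ G.edist a b + G.edist b j := SimpleGraph.edist_triangle
        _ = _ := by
          rw [SimpleGraph.edist_eq_one_iff_adj.mpr (genCorona_adj_inl_inl.mp h), add_comm]
    simp only [genCoronaPotential]
    gcongr
  · obtain rfl : a = l := genCorona_adj_inl_inr.mp h
    simp only [genCoronaPotential]
    split_ifs with hj
    · simp [hj]
    · calc _ ≤ G.edist a j + 3 := by gcongr; norm_num
        _ = _ := by ring
  · obtain rfl : b = k := genCorona_adj_inl_inr.mp h.symm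
    simp only [genCoronaPotential]
    split_ifs
    · exact zero_le
    · exact le_of_eq (by ring)
  · obtain rfl : k = l := genCorona_fst_eq_of_adj_inr_inr h
    exact le_self_add

lemma genCorona_edist_inr_inr {i j : α} (hij : i ≠ j) (p : β i) (q : β j) :
    (genCorona G H).edist (inr ⟨i, p⟩) (inr ⟨j, q⟩) = G.edist i j + 2 := by
  refine le_antisymm (genCorona_edist_le (genCorona_edist_inr_inl_fst ⟨i, p⟩).le
    (by rw [SimpleGraph.edist_comm, genCorona_edist_inr_inl_fst ⟨j, q⟩])) ?_
  have := SimpleGraph.le_add_edist (genCoronaPotential_le_add_one (G := G) (H := H) j)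
    (inr ⟨i, p⟩) (inr ⟨j, q⟩)
  simpa [genCoronaPotential, hij] using this

lemma genCorona_ediam [Nontrivial α] (hne : ∀ i, Nonempty (β i)) :
    (genCorona G H).ediam = G.ediam + 2 := by
  refine le_antisymm (SimpleGraph.ediam_le_of_edist_le fun u v => ?_) ?_
  · obtain ⟨a, ha⟩ := genCorona_exists_edist_inl_le_one (H := H) u
    obtain ⟨b, hb⟩ := genCorona_exists_edist_inl_le_one (H := H) v
    rw [SimpleGraph.edist_comm] at hb
    exact (genCorona_edist_le ha hb).trans (by gcongr; exact SimpleGraph.edist_le_ediam)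
  · rw [SimpleGraph.ediam_def, ENat.iSup_add]
    refine iSup_le fun ⟨a, b⟩ => ?_
    obtain ⟨c, hca, hbc⟩ : ∃ c, c ≠ a ∧ G.edist a b ≤ G.edist a c := by
      by_cases hab : b = a
      · obtain ⟨c, hc⟩ := exists_ne a
        exact ⟨c, hc, by simp [hab]⟩
      · exact ⟨b, hab, le_rfl⟩
    obtain ⟨p⟩ := hne a
    obtain ⟨q⟩ := hne c
    calc G.edist a b + 2 ≤ G.edist a c + 2 := by gcongr
      _ = (genCorona G H).edist (inr ⟨a, p⟩) (inr ⟨c, q⟩) :=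
          (genCorona_edist_inr_inr hca.symm p q).symm
      _ ≤ _ := SimpleGraph.edist_le_ediam

end genCorona

theorem genCorona_antipodal_iff_general
    {α : Type} {β : α → Type}
    (G : SimpleGraph α) (H : ∀ i, SimpleGraph (β i))
    (hne : ∀ i, Nonempty (β i))
    (i j : α) (hij : i ≠ j) (p : β i) (q : β j) :
    (genCorona G H).dist (Sum.inr ⟨i, p⟩) (Sum.inr ⟨j, q⟩) = (genCorona G H).diam ↔
      G.dist i j = G.diam := by
  have : Nontrivial α := ⟨⟨i, j, hij⟩⟩
  rw [SimpleGraph.dist, SimpleGraph.diam, genCorona_edist_inr_inr hij, genCorona_ediam hne]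
  exact ENat.toNat_add_left_inj (SimpleGraph.edist_eq_zero_iff.not.mpr hij)
    SimpleGraph.ediam_ne_zero 2

/-- In the generalized corona, `v_p ∈ H i` and `v_q ∈ H j` (`i ≠ j`) are antipodal
in the product iff `u_i` and `u_j` are antipodal in `G`. -/
theorem genCorona_antipodal_iff
    {α : Type} {β : α → Type} [Fintype α] [∀ i, Fintype (β i)]
    (G : SimpleGraph α) (H : ∀ i, SimpleGraph (β i))
    (hG : G.Connected) (hne : ∀ i, Nonempty (β i))
    (i j : α) (hij : i ≠ j) (p : β i) (q : β j) :
    (genCorona G H).dist (Sum.inr ⟨i, p⟩) (Sum.inr ⟨j, q⟩) = (genCorona G H).diam ↔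
      G.dist i j = G.diam :=
  genCorona_antipodal_iff_general G H hne i j hij p q
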